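/- arXiv:2410.13163 — 2 statements merged into one kernel-verified Lean document; each statement's English description precedes it below -/
import Mathlib

section
/- Let N, W ≥ 1 and q ≥ 1 be integers, let f, g : Fin N → Bool be predicates, and let Δ = {x ∈ Fin N : f(x) ≠ g(x)}. Let U_0, …, U_q be unitaries on H = H_in ⊗ ℂ^N ⊗ ℂ² ⊗ ℂ^W for a finite-dimensional complex Hilbert space H_in, let ψ_in ∈ H_in be a unit vector, and for a predicate h define Ψ_0^h = U_0(ψ_in ⊗ e_0 ⊗ e_0 ⊗ e_0) and Ψ_{i+1}^h = U_{i+1}(I_{H_in} ⊗ O_h ⊗ I_W)Ψ_i^h for 0 ≤ i < q. Then ‖Ψ_q^f − Ψ_q^g‖ ≤ 2·√( q · Σ_{i=0}^{q−1} ‖(I_{H_in} ⊗ Π_Δ ⊗ I_{ℂ²} ⊗ I_W) Ψ_i^f‖² ), where Π_Δ = Σ_{x∈Δ} e_x e_x† is the projection of ℂ^N onto the coordinates in Δ. -/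
noncomputable section

/-- Apply a square matrix to a vector of a Euclidean space. -/
def matApply {κ : Type} [Fintype κ] (M : Matrix κ κ ℂ) (ψ : EuclideanSpace ℂ κ) :
    EuclideanSpace ℂ κ :=
  WithLp.toLp 2 (fun i => ∑ j, M i j * ψ j)

/-- The oracle unitary `I_{H_in} ⊗ O_h ⊗ I_W` on `H_in ⊗ ℂ^N ⊗ ℂ² ⊗ ℂ^W`,
where `O_h (e_x ⊗ e_b) = e_x ⊗ e_{b XOR h x}`, applied to a vector. -/
def oracleApply {ι τ : Type} {N : ℕ} (h : Fin N → Bool)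
    (ψ : EuclideanSpace ℂ (ι × Fin N × Bool × τ)) :
    EuclideanSpace ℂ (ι × Fin N × Bool × τ) :=
  WithLp.toLp 2 (fun p => ψ (p.1, p.2.1, xor p.2.2.1 (h p.2.1), p.2.2.2))

/-- The projection `I_{H_in} ⊗ Π_Δ ⊗ I_{ℂ²} ⊗ I_W` onto the coordinates where the
predicates `f` and `g` differ, applied to a vector. -/
def projDeltaApply {ι τ : Type} {N : ℕ} (f g : Fin N → Bool)
    (ψ : EuclideanSpace ℂ (ι × Fin N × Bool × τ)) :
    EuclideanSpace ℂ (ι × Fin N × Bool × τ) :=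
  WithLp.toLp 2 (fun p => if f p.2.1 ≠ g p.2.1 then ψ p else 0)

private lemma matApply_eq_toEuclideanCLM {κ : Type} [Fintype κ] [DecidableEq κ]
    (M : Matrix κ κ ℂ) (ψ : EuclideanSpace ℂ κ) :
    matApply M ψ = Matrix.toEuclideanCLM (𝕜 := ℂ) M ψ := by
  have h := Matrix.coe_toEuclideanCLM_eq_toEuclideanLin (𝕜 := ℂ) M
  have h2 : Matrix.toEuclideanCLM (𝕜 := ℂ) M ψ = Matrix.toEuclideanLin M ψ := by
    rw [← h]; rfl
  rw [h2, Matrix.toEuclideanLin_apply]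
  rfl

private lemma matApply_unitary_norm {κ : Type} [Fintype κ] [DecidableEq κ]
    {M : Matrix κ κ ℂ} (hM : M ∈ Matrix.unitaryGroup κ ℂ)
    (ψ : EuclideanSpace ℂ κ) : ‖matApply M ψ‖ = ‖ψ‖ := by
  rw [matApply_eq_toEuclideanCLM]
  apply ContinuousLinearMap.norm_map_of_mem_unitary
  rw [Unitary.mem_iff] at hM ⊢
  constructor
  · rw [← map_star, ← map_mul, hM.1, map_one]
  · rw [← map_star, ← map_mul, hM.2, map_one]

private lemma matApply_sub {κ : Type} [Fintype κ] (M : Matrix κ κ ℂ)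
    (a b : EuclideanSpace ℂ κ) :
    matApply M (a - b) = matApply M a - matApply M b := by
  ext i
  show (∑ j, M i j * (a - b) j) = (∑ j, M i j * a j) - ∑ j, M i j * b j
  rw [← Finset.sum_sub_distrib]
  refine Finset.sum_congr rfl fun j _ => ?_
  have : (a - b) j = a j - b j := rfl
  rw [this, mul_sub]

private lemma oracleApply_sub {ι τ : Type} {N : ℕ} (h : Fin N → Bool)
    (a b : EuclideanSpace ℂ (ι × Fin N × Bool × τ)) :
    oracleApply h (a - b) = oracleApply h a - oracleApply h b := rfl

/-- The coordinate permutation underlying the oracle. -/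
private def oracleEquiv {ι τ : Type} {N : ℕ} (h : Fin N → Bool) :
    (ι × Fin N × Bool × τ) ≃ (ι × Fin N × Bool × τ) where
  toFun p := (p.1, p.2.1, xor p.2.2.1 (h p.2.1), p.2.2.2)
  invFun p := (p.1, p.2.1, xor p.2.2.1 (h p.2.1), p.2.2.2)
  left_inv p := by simp [Bool.xor_assoc]
  right_inv p := by simp [Bool.xor_assoc]

private lemma oracleApply_norm {ι τ : Type} [Fintype ι] [Fintype τ] {N : ℕ}
    (h : Fin N → Bool) (ψ : EuclideanSpace ℂ (ι × Fin N × Bool × τ)) :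
    ‖oracleApply h ψ‖ = ‖ψ‖ := by
  rw [EuclideanSpace.norm_eq, EuclideanSpace.norm_eq]
  congr 1
  exact Equiv.sum_comp (oracleEquiv h) (fun p => ‖ψ p‖ ^ 2)

private lemma oracle_diff {ι τ : Type} {N : ℕ} (f g : Fin N → Bool)
    (ψ : EuclideanSpace ℂ (ι × Fin N × Bool × τ)) :
    oracleApply f ψ - oracleApply g ψ =
      oracleApply f (projDeltaApply f g ψ) - oracleApply g (projDeltaApply f g ψ) := by
  ext p
  show ψ (p.1, p.2.1, xor p.2.2.1 (f p.2.1), p.2.2.2)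
      - ψ (p.1, p.2.1, xor p.2.2.1 (g p.2.1), p.2.2.2)
    = projDeltaApply f g ψ (p.1, p.2.1, xor p.2.2.1 (f p.2.1), p.2.2.2)
      - projDeltaApply f g ψ (p.1, p.2.1, xor p.2.2.1 (g p.2.1), p.2.2.2)
  by_cases hfg : f p.2.1 = g p.2.1
  · simp only [projDeltaApply]
    rw [hfg]
    simp
  · simp [projDeltaApply, hfg, Ne.symm hfg]

theorem stmt_1 (N W q : ℕ) (hN : 1 ≤ N) (hW : 1 ≤ W) (hq : 1 ≤ q)
    (f g : Fin N → Bool)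
    (ι : Type) [Fintype ι] [DecidableEq ι]
    (U : ℕ → Matrix (ι × Fin N × Bool × Fin W) (ι × Fin N × Bool × Fin W) ℂ)
    (hU : ∀ i ≤ q, U i ∈ Matrix.unitaryGroup (ι × Fin N × Bool × Fin W) ℂ)
    (ψin : EuclideanSpace ℂ ι) (hψin : ‖ψin‖ = 1)
    (Ψf Ψg : ℕ → EuclideanSpace ℂ (ι × Fin N × Bool × Fin W))
    (hΨf0 : Ψf 0 = matApply (U 0) (WithLp.toLp 2 (fun p =>
      if p.2.1 = ⟨0, hN⟩ ∧ p.2.2.1 = false ∧ p.2.2.2 = ⟨0, hW⟩ then ψin p.1 else 0)))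
    (hΨg0 : Ψg 0 = matApply (U 0) (WithLp.toLp 2 (fun p =>
      if p.2.1 = ⟨0, hN⟩ ∧ p.2.2.1 = false ∧ p.2.2.2 = ⟨0, hW⟩ then ψin p.1 else 0)))
    (hΨfS : ∀ i < q, Ψf (i + 1) = matApply (U (i + 1)) (oracleApply f (Ψf i)))
    (hΨgS : ∀ i < q, Ψg (i + 1) = matApply (U (i + 1)) (oracleApply g (Ψg i))) :
    ‖Ψf q - Ψg q‖ ≤
      2 * Real.sqrt (q * ∑ i ∈ Finset.range q, ‖projDeltaApply f g (Ψf i)‖ ^ 2) := by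
  -- hybrid argument
  have key : ∀ k, k ≤ q →
      ‖Ψf k - Ψg k‖ ≤ ∑ i ∈ Finset.range k, 2 * ‖projDeltaApply f g (Ψf i)‖ := by
    intro k
    induction k with
    | zero =>
      intro _
      rw [hΨf0, hΨg0, sub_self, norm_zero, Finset.range_zero, Finset.sum_empty]
    | succ k ih =>
      intro hk
      have hk' : k < q := hk
      rw [hΨfS k hk', hΨgS k hk', ← matApply_sub,
        matApply_unitary_norm (hU (k + 1) hk)]
      have split : oracleApply f (Ψf k) - oracleApply g (Ψg k)
          = (oracleApply f (Ψf k) - oracleApply g (Ψf k))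
            + (oracleApply g (Ψf k) - oracleApply g (Ψg k)) := by
        abel
      rw [split]
      refine le_trans (norm_add_le _ _) ?_
      rw [Finset.sum_range_succ]
      have h1 : ‖oracleApply f (Ψf k) - oracleApply g (Ψf k)‖
          ≤ 2 * ‖projDeltaApply f g (Ψf k)‖ := by
        rw [oracle_diff]
        refine le_trans (norm_sub_le _ _) ?_
        rw [oracleApply_norm, oracleApply_norm]
        linarith [norm_nonneg (projDeltaApply f g (Ψf k))]
      have h2 : ‖oracleApply g (Ψf k) - oracleApply g (Ψg k)‖ = ‖Ψf k - Ψg k‖ := by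
        rw [← oracleApply_sub, oracleApply_norm]
      have h3 : ‖oracleApply g (Ψf k) - oracleApply g (Ψg k)‖
          ≤ ∑ i ∈ Finset.range k, 2 * ‖projDeltaApply f g (Ψf i)‖ := by
        rw [h2]; exact ih (Nat.le_of_lt hk')
      linarith
  -- Cauchy–Schwarz
  have hcs : ∑ i ∈ Finset.range q, ‖projDeltaApply f g (Ψf i)‖
      ≤ Real.sqrt (q * ∑ i ∈ Finset.range q, ‖projDeltaApply f g (Ψf i)‖ ^ 2) := by
    rw [Real.le_sqrt (Finset.sum_nonneg fun i _ => norm_nonneg _)]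
    swap
    · positivity
    have := sq_sum_le_card_mul_sum_sq
      (s := Finset.range q) (f := fun i => ‖projDeltaApply f g (Ψf i)‖)
    simpa [Finset.card_range] using this
  calc ‖Ψf q - Ψg q‖ ≤ ∑ i ∈ Finset.range q, 2 * ‖projDeltaApply f g (Ψf i)‖ :=
        key q le_rfl
    _ = 2 * ∑ i ∈ Finset.range q, ‖projDeltaApply f g (Ψf i)‖ := by
        rw [Finset.mul_sum]
    _ ≤ 2 * Real.sqrt (q * ∑ i ∈ Finset.range q, ‖projDeltaApply f g (Ψf i)‖ ^ 2) := by
        linarith [hcs]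
end
end

section
/- Let n, k, s, q, W be integers with 1 ≤ k < s ≤ 2^n, k < 2^n and q, W ≥ 1, and set N = 2^n. Let U_0, …, U_q be unitaries on H = (ℂ^N)^{⊗k} ⊗ ℂ^N ⊗ ℂ² ⊗ ℂ^N ⊗ ℂ^W. For a subset S ⊆ Fin N of size s and an injective tuple (x_1, …, x_k) of elements of S, define the final state Ψ_q by Ψ_0 = U_0(e_{x_1} ⊗ ⋯ ⊗ e_{x_k} ⊗ e_0 ⊗ e_0 ⊗ e_0 ⊗ e_0) and Ψ_{i+1} = U_{i+1}(I ⊗ O_{1_S} ⊗ I)Ψ_i, where O_{1_S} acts on the middle factor ℂ^N ⊗ ℂ², and define the success probability as Σ_{y ∈ S, y ∉ {x_1,…,x_k}} ‖(I_{(ℂ^N)^{⊗k}} ⊗ I_{ℂ^N} ⊗ I_{ℂ²} ⊗ e_y e_y† ⊗ I_W) Ψ_q‖². Then the average of this success probability, over the uniform choice of a subset S ⊆ Fin N with #S = s and, given S, the uniform choice of an injective tuple (x_1, …, x_k) ∈ S^k, is at most 2q·√((s−k)/(N−k)) + (s−k)/(N−k). -/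
noncomputable section

/-- The state of the algorithm `U_q O_h U_{q-1} ⋯ U_1 O_h U_0` after `i` queries:
`Ψ 0 = U 0 init` and `Ψ (i+1) = U (i+1) (I ⊗ O_h ⊗ I) (Ψ i)`. -/
def finalState {ι τ : Type} [Fintype ι] [Fintype τ] {N : ℕ}
    (U : ℕ → Matrix (ι × Fin N × Bool × τ) (ι × Fin N × Bool × τ) ℂ)
    (h : Fin N → Bool)
    (init : EuclideanSpace ℂ (ι × Fin N × Bool × τ)) :
    ℕ → EuclideanSpace ℂ (ι × Fin N × Bool × τ)
  | 0 => matApply (U 0) init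
  | (i + 1) => matApply (U (i + 1)) (oracleApply h (finalState U h init i))

/-- The initial state `ψin ⊗ e_{x0} ⊗ e_false ⊗ e_{t0}`. -/
def initEmbed {ι τ : Type} [DecidableEq τ] {N : ℕ} (x0 : Fin N) (t0 : τ)
    (ψin : EuclideanSpace ℂ ι) : EuclideanSpace ℂ (ι × Fin N × Bool × τ) :=
  WithLp.toLp 2 (fun p => if p.2.1 = x0 ∧ p.2.2.1 = false ∧ p.2.2.2 = t0 then ψin p.1 else 0)

/-- The computational-basis vector `e_i`. -/
def basisVec {κ : Type} [DecidableEq κ] (i : κ) : EuclideanSpace ℂ κ :=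
  WithLp.toLp 2 (fun j => if j = i then 1 else 0)

/-- The projection onto the computational-basis vector `e_y` of the designated
output register `ℂ^N` (tensored with the identity elsewhere), applied to a vector. -/
def projOutput {ι β : Type} {N : ℕ} (y : Fin N)
    (ψ : EuclideanSpace ℂ (ι × Fin N × Bool × (Fin N × β))) :
    EuclideanSpace ℂ (ι × Fin N × Bool × (Fin N × β)) :=
  WithLp.toLp 2 (fun p => if p.2.2.2.1 = y then ψ p else 0)

namespace QAux

open Finset
set_option linter.unusedSectionVars false

/-! ### Generic norm lemmas -/

lemma norm_sq_eq' {κ : Type} [Fintype κ] (ψ : EuclideanSpace ℂ κ) :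
    ‖ψ‖ ^ 2 = ∑ p, ‖ψ p‖ ^ 2 := by
  rw [EuclideanSpace.norm_eq, Real.sq_sqrt (by positivity)]

lemma norm_eq_of_sumsq {κ : Type} [Fintype κ] {ψ φ : EuclideanSpace ℂ κ}
    (h : ∑ p, ‖ψ p‖ ^ 2 = ∑ p, ‖φ p‖ ^ 2) : ‖ψ‖ = ‖φ‖ := by
  rw [EuclideanSpace.norm_eq, EuclideanSpace.norm_eq, h]

lemma matApply_sumsq {κ : Type} [Fintype κ] [DecidableEq κ] {M : Matrix κ κ ℂ}
    (hM : star M * M = 1) (ψ : EuclideanSpace ℂ κ) :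
    ∑ i, ‖matApply M ψ i‖ ^ 2 = ∑ j, ‖ψ j‖ ^ 2 := by
  have entry : ∀ j' j : κ, (∑ i, (starRingEnd ℂ) (M i j') * M i j) = if j' = j then 1 else 0 := by
    intro j' j
    have h := congrFun (congrFun hM j') j
    simpa [Matrix.mul_apply, Matrix.one_apply, Matrix.star_apply] using h
  have cast : ((∑ i, ‖matApply M ψ i‖ ^ 2 : ℝ) : ℂ) = ((∑ j, ‖ψ j‖ ^ 2 : ℝ) : ℂ) := by
    push_cast
    calc ∑ i, (‖matApply M ψ i‖ : ℂ) ^ 2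
        = ∑ i, (starRingEnd ℂ) (matApply M ψ i) * matApply M ψ i := by
          simp [Complex.conj_mul']
      _ = ∑ i, ∑ j', ∑ j, ((starRingEnd ℂ) (M i j') * M i j) * ((starRingEnd ℂ) (ψ j') * ψ j) := by
          refine Finset.sum_congr rfl fun i _ => ?_
          simp only [matApply, map_sum, map_mul, Finset.sum_mul_sum]
          refine Finset.sum_congr rfl fun j' _ => Finset.sum_congr rfl fun j _ => by ring
      _ = ∑ j', ∑ j, (∑ i, (starRingEnd ℂ) (M i j') * M i j) * ((starRingEnd ℂ) (ψ j') * ψ j) := by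
          rw [Finset.sum_comm]
          refine Finset.sum_congr rfl fun j' _ => ?_
          rw [Finset.sum_comm]
          refine Finset.sum_congr rfl fun j _ => ?_
          rw [Finset.sum_mul]
      _ = ∑ j, (starRingEnd ℂ) (ψ j) * ψ j := by
          simp [entry, ite_mul]
      _ = ∑ j, (‖ψ j‖ : ℂ) ^ 2 := by simp [Complex.conj_mul']
  exact_mod_cast cast

/-! ### Oracle lemmas -/

variable {ι τ : Type} [Fintype ι] [Fintype τ] [DecidableEq ι] [DecidableEq τ] {N : ℕ}

def flipIdx (h : Fin N → Bool) (p : ι × Fin N × Bool × τ) : ι × Fin N × Bool × τ :=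
  (p.1, p.2.1, xor p.2.2.1 (h p.2.1), p.2.2.2)

lemma flipIdx_invol (h : Fin N → Bool) : Function.Involutive (flipIdx (ι := ι) (τ := τ) h) := by
  intro p; simp [flipIdx, Bool.xor_assoc]

lemma oracleApply_eq (h : Fin N → Bool) (ψ : EuclideanSpace ℂ (ι × Fin N × Bool × τ)) (p) :
    oracleApply h ψ p = ψ (flipIdx h p) := rfl

lemma oracle_sumsq (h : Fin N → Bool) (ψ : EuclideanSpace ℂ (ι × Fin N × Bool × τ))
    (F : ℂ → ℝ) :
    ∑ p, F (oracleApply h ψ p) = ∑ p, F (ψ p) :=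
  Fintype.sum_bijective (flipIdx h) (flipIdx_invol h).bijective _ _ (fun _ => rfl)

lemma sum_flip_filter (f : Fin N → Bool) (q : Fin N → Prop) [DecidablePred q]
    (ψ : EuclideanSpace ℂ (ι × Fin N × Bool × τ)) :
    ∑ p ∈ univ.filter (fun p : ι × Fin N × Bool × τ => q p.2.1), ‖ψ (flipIdx f p)‖ ^ 2
      = ∑ p ∈ univ.filter (fun p : ι × Fin N × Bool × τ => q p.2.1), ‖ψ p‖ ^ 2 := by
  apply Finset.sum_nbij' (fun p => flipIdx f p) (fun p => flipIdx f p)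
  · intro a ha; simpa [flipIdx] using ha
  · intro a ha; simpa [flipIdx] using ha
  · intro a _; exact flipIdx_invol f a
  · intro a _; exact flipIdx_invol f a
  · intro a _; rfl

lemma oracle_diff_sq (g h : Fin N → Bool) (ψ : EuclideanSpace ℂ (ι × Fin N × Bool × τ)) :
    ‖(oracleApply g ψ - oracleApply h ψ : EuclideanSpace ℂ _)‖ ^ 2
      ≤ 4 * ∑ p ∈ univ.filter (fun p : ι × Fin N × Bool × τ => g p.2.1 ≠ h p.2.1), ‖ψ p‖ ^ 2 := by
  rw [EuclideanSpace.norm_eq, Real.sq_sqrt (by positivity)]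
  have split : ∀ p : ι × Fin N × Bool × τ,
      ‖(oracleApply g ψ - oracleApply h ψ : EuclideanSpace ℂ _) p‖ ^ 2
        = if g p.2.1 ≠ h p.2.1 then ‖ψ (flipIdx g p) - ψ (flipIdx h p)‖ ^ 2 else 0 := by
    intro p
    by_cases hgh : g p.2.1 = h p.2.1
    · simp only [hgh, ne_eq, not_true_eq_false, if_false]
      show ‖ψ (flipIdx g p) - ψ (flipIdx h p)‖ ^ 2 = 0
      simp only [flipIdx]
      rw [hgh]
      simp
    · simp only [hgh, ne_eq, not_false_eq_true, if_true]
      rfl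
  calc (∑ p, ‖(oracleApply g ψ - oracleApply h ψ : EuclideanSpace ℂ _) p‖ ^ 2)
      = ∑ p ∈ univ.filter (fun p : ι × Fin N × Bool × τ => g p.2.1 ≠ h p.2.1),
          ‖ψ (flipIdx g p) - ψ (flipIdx h p)‖ ^ 2 := by
        rw [Finset.sum_filter]
        exact Finset.sum_congr rfl fun p _ => split p
    _ ≤ ∑ p ∈ univ.filter (fun p : ι × Fin N × Bool × τ => g p.2.1 ≠ h p.2.1),
          (2 * ‖ψ (flipIdx g p)‖ ^ 2 + 2 * ‖ψ (flipIdx h p)‖ ^ 2) := by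
        refine Finset.sum_le_sum fun p _ => ?_
        have h1 := norm_sub_le (ψ (flipIdx g p)) (ψ (flipIdx h p))
        have h2 : ‖ψ (flipIdx g p) - ψ (flipIdx h p)‖ ^ 2
            ≤ (‖ψ (flipIdx g p)‖ + ‖ψ (flipIdx h p)‖) ^ 2 :=
          pow_le_pow_left₀ (norm_nonneg _) h1 2
        nlinarith [sq_nonneg (‖ψ (flipIdx g p)‖ - ‖ψ (flipIdx h p)‖)]
    _ = 4 * ∑ p ∈ univ.filter (fun p : ι × Fin N × Bool × τ => g p.2.1 ≠ h p.2.1), ‖ψ p‖ ^ 2 := by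
        rw [Finset.sum_add_distrib, ← Finset.mul_sum, ← Finset.mul_sum]
        have e1 := sum_flip_filter (ι := ι) (τ := τ) g (fun z => g z ≠ h z) ψ
        have e2 := sum_flip_filter (ι := ι) (τ := τ) h (fun z => g z ≠ h z) ψ
        rw [e1, e2]; ring

/-! ### Helstrom-type lemma -/

lemma nsqc (z : ℂ) : ‖z‖ ^ 2 = z.re ^ 2 + z.im ^ 2 := by
  rw [Complex.sq_norm, Complex.normSq_apply]; ring

lemma pointwise_id (c t : ℝ) (hct : c ^ 2 + t ^ 2 = 1) (bp dp : ℂ) :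
    2 * t * (1 + t) * (‖(c : ℂ) * bp + dp‖ ^ 2 - ‖bp‖ ^ 2)
      = ‖((c * t : ℝ) : ℂ) * bp + (((1 + t) : ℝ) : ℂ) * dp‖ ^ 2
        - ‖((t * (1 + t) : ℝ) : ℂ) * bp - ((c : ℝ) : ℂ) * dp‖ ^ 2 := by
  simp only [nsqc, Complex.add_re, Complex.add_im, Complex.sub_re, Complex.sub_im,
    Complex.mul_re, Complex.mul_im, Complex.ofReal_re, Complex.ofReal_im]
  linear_combination (t * (2 + t) * (bp.re ^ 2 + bp.im ^ 2) + dp.re ^ 2 + dp.im ^ 2) * hct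

lemma helstrom {κ : Type} [Fintype κ] (a b : EuclideanSpace ℂ κ) (ha : ‖a‖ = 1)
    (hb : ‖b‖ = 1) (G : Finset κ) :
    ∑ p ∈ G, ‖a p‖ ^ 2 ≤ (∑ p ∈ G, ‖b p‖ ^ 2) + ‖a - b‖ := by
  classical
  obtain ⟨c0, hc0def⟩ : ∃ z : ℂ, z = inner ℂ b a := ⟨_, rfl⟩
  have hc0 : ‖c0‖ ≤ 1 := by
    rw [hc0def]
    calc ‖(inner ℂ b a : ℂ)‖ ≤ ‖b‖ * ‖a‖ := norm_inner_le_norm b a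
    _ = 1 := by rw [ha, hb]; ring
  obtain ⟨c, hcdef⟩ : ∃ r : ℝ, r = ‖c0‖ := ⟨_, rfl⟩
  have hc1 : c ≤ 1 := hcdef ▸ hc0
  have hc0' : 0 ≤ c := hcdef ▸ norm_nonneg _
  obtain ⟨t, htdef⟩ : ∃ r : ℝ, r = Real.sqrt (1 - c ^ 2) := ⟨_, rfl⟩
  have ht0 : 0 ≤ t := htdef ▸ Real.sqrt_nonneg _
  have ht2 : t ^ 2 = 1 - c ^ 2 := htdef ▸ Real.sq_sqrt (by nlinarith)
  have hct : c ^ 2 + t ^ 2 = 1 := by rw [ht2]; ring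
  have hab : t ≤ ‖a - b‖ := by
    have h1 : ‖a - b‖ ^ 2 = 2 - 2 * RCLike.re (inner ℂ a b : ℂ) := by
      rw [@norm_sub_sq ℂ _ _ _ _ a b, ha, hb]; ring
    have h2 : RCLike.re (inner ℂ a b : ℂ) ≤ c := by
      calc RCLike.re (inner ℂ a b : ℂ) ≤ ‖(inner ℂ a b : ℂ)‖ := RCLike.re_le_norm _
      _ = c := by rw [← inner_conj_symm a b, ← hc0def, hcdef]; exact RCLike.norm_conj _
    have h3 : t ^ 2 ≤ ‖a - b‖ ^ 2 := by rw [ht2, h1]; nlinarith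
    nlinarith [norm_nonneg (a - b)]
  obtain ⟨γ, hγdef⟩ : ∃ z : ℂ, z = if c0 = 0 then 1 else (starRingEnd ℂ) c0 / (c : ℂ) :=
    ⟨_, rfl⟩
  have hγnorm : ‖γ‖ = 1 := by
    by_cases h : c0 = 0
    · simp [hγdef, h]
    · have hcne : c ≠ 0 := by simp [hcdef, norm_eq_zero, h]
      have h1 : ‖((c : ℝ) : ℂ)‖ = c := by
        rw [Complex.norm_real]; exact Real.norm_of_nonneg hc0'
      rw [hγdef, if_neg h, norm_div, RCLike.norm_conj, h1, ← hcdef]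
      exact div_self hcne
  have hγc0 : γ * c0 = (c : ℂ) := by
    by_cases h : c0 = 0
    · simp [hγdef, h, hcdef, norm_eq_zero]
    · have hc : (c : ℂ) ≠ 0 := by
        simp [Complex.ofReal_eq_zero, hcdef, norm_eq_zero, h]
      rw [hγdef, if_neg h, div_mul_eq_mul_div, Complex.conj_mul', ← hcdef,
        pow_two, mul_div_assoc, div_self hc, mul_one]
  obtain ⟨a', ha'def⟩ : ∃ w : EuclideanSpace ℂ κ, w = γ • a := ⟨_, rfl⟩
  have ha'norm : ‖a'‖ = 1 := by rw [ha'def, norm_smul, hγnorm, ha]; ring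
  have ha'pt : ∀ p, ‖a' p‖ = ‖a p‖ := by
    intro p
    rw [ha'def]
    show ‖γ * a p‖ = ‖a p‖
    rw [norm_mul, hγnorm, one_mul]
  have hba' : (inner ℂ b a' : ℂ) = (c : ℂ) := by
    rw [ha'def, inner_smul_right, ← hc0def, hγc0]
  obtain ⟨d, hddef⟩ : ∃ w : EuclideanSpace ℂ κ, w = a' - (c : ℂ) • b := ⟨_, rfl⟩
  have hbd : (inner ℂ b d : ℂ) = 0 := by
    rw [hddef, inner_sub_right, inner_smul_right, hba', inner_self_eq_norm_sq_to_K, hb]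
    simp
  have hdnorm : ‖d‖ ^ 2 = t ^ 2 := by
    have h1 : (inner ℂ a' ((c : ℂ) • b) : ℂ) = ((c * c : ℝ) : ℂ) := by
      rw [inner_smul_right]
      have h2 : (inner ℂ a' b : ℂ) = (starRingEnd ℂ) (inner ℂ b a') := (inner_conj_symm a' b).symm
      rw [h2, hba', Complex.conj_ofReal]
      push_cast; ring
    have h2 : ‖d‖ ^ 2 = ‖a'‖ ^ 2 - 2 * RCLike.re ((inner ℂ a' ((c : ℂ) • b)) : ℂ)
        + ‖(c : ℂ) • b‖ ^ 2 := by
      rw [hddef]; exact @norm_sub_sq ℂ _ _ _ _ a' ((c : ℂ) • b)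
    have h3 : ‖(c : ℂ) • b‖ ^ 2 = c ^ 2 := by
      rw [norm_smul, hb, Complex.norm_real, mul_one, Real.norm_eq_abs, sq_abs]
    rw [h2, h1, ha'norm, h3]
    simp only [RCLike.re_to_complex, Complex.ofReal_re]
    rw [ht2]; ring
  have hdpt : ∀ p, a' p = (c : ℂ) * b p + d p := by
    intro p; rw [hddef]
    show a' p = (c : ℂ) * b p + (a' p - (c : ℂ) * b p); ring
  by_cases htz : t = 0
  · have hceq1 : c = 1 := by nlinarith
    have hd0 : d = 0 := by
      have hn : ‖d‖ = 0 := by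
        have := hdnorm; rw [htz] at this; nlinarith [norm_nonneg d]
      exact norm_eq_zero.mp hn
    have hpt : ∀ p, ‖a p‖ = ‖b p‖ := by
      intro p
      rw [← ha'pt p, hdpt p, hd0, hceq1]
      show ‖(1 : ℂ) * b p + (0 : ℂ)‖ = ‖b p‖
      simp
    have hsum : ∑ p ∈ G, ‖a p‖ ^ 2 = ∑ p ∈ G, ‖b p‖ ^ 2 :=
      Finset.sum_congr rfl fun p _ => by rw [hpt p]
    rw [hsum]
    simpa using norm_nonneg (a - b)
  · have htpos : 0 < t := lt_of_le_of_ne ht0 (Ne.symm htz)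
    have h2t : (0 : ℝ) < 2 * t * (1 + t) := by nlinarith
    obtain ⟨u, hudef⟩ : ∃ w : EuclideanSpace ℂ κ,
        w = ((c * t : ℝ) : ℂ) • b + (((1 + t) : ℝ) : ℂ) • d := ⟨_, rfl⟩
    obtain ⟨v, hvdef⟩ : ∃ w : EuclideanSpace ℂ κ,
        w = ((t * (1 + t) : ℝ) : ℂ) • b - ((c : ℝ) : ℂ) • d := ⟨_, rfl⟩
    have hupt : ∀ p, u p = ((c * t : ℝ) : ℂ) * b p + (((1 + t) : ℝ) : ℂ) * d p :=
      fun p => by rw [hudef]; rfl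
    have hvpt : ∀ p, v p = ((t * (1 + t) : ℝ) : ℂ) * b p - ((c : ℝ) : ℂ) * d p :=
      fun p => by rw [hvdef]; rfl
    have hunorm : ‖u‖ ^ 2 = 2 * t ^ 2 * (1 + t) := by
      have horth : (inner ℂ (((c * t : ℝ) : ℂ) • b) ((((1 + t) : ℝ) : ℂ) • d) : ℂ) = 0 := by
        rw [inner_smul_right, inner_smul_left, hbd]; ring
      have hexp := @norm_add_sq ℂ _ _ _ _ (((c * t : ℝ) : ℂ) • b) ((((1 + t) : ℝ) : ℂ) • d)
      rw [horth] at hexp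
      rw [hudef, hexp, norm_smul, norm_smul, hb, Complex.norm_real, Complex.norm_real]
      simp only [map_zero, mul_zero, add_zero, mul_one, mul_pow, sq_abs]
      rw [Real.norm_eq_abs, Real.norm_eq_abs, sq_abs, sq_abs]
      linear_combination (1 + t) ^ 2 * hdnorm + t ^ 2 * hct
    have key : ∀ p, 2 * t * (1 + t) * (‖a' p‖ ^ 2 - ‖b p‖ ^ 2) = ‖u p‖ ^ 2 - ‖v p‖ ^ 2 := by
      intro p
      rw [hdpt p, hupt p, hvpt p]
      exact pointwise_id c t hct (b p) (d p)
    have hsumkey : 2 * t * (1 + t) * ((∑ p ∈ G, ‖a p‖ ^ 2) - ∑ p ∈ G, ‖b p‖ ^ 2)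
        = (∑ p ∈ G, ‖u p‖ ^ 2) - ∑ p ∈ G, ‖v p‖ ^ 2 := by
      rw [← Finset.sum_sub_distrib, ← Finset.sum_sub_distrib, Finset.mul_sum]
      refine Finset.sum_congr rfl fun p _ => ?_
      rw [← ha'pt p]
      exact key p
    have husum : ∑ p ∈ G, ‖u p‖ ^ 2 ≤ 2 * t ^ 2 * (1 + t) := by
      rw [← hunorm, norm_sq_eq' u]
      exact Finset.sum_le_sum_of_subset_of_nonneg (Finset.subset_univ G)
        (fun p _ _ => sq_nonneg _)
    have hvsum : (0 : ℝ) ≤ ∑ p ∈ G, ‖v p‖ ^ 2 := Finset.sum_nonneg fun p _ => sq_nonneg _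
    have hfinal : (∑ p ∈ G, ‖a p‖ ^ 2) - ∑ p ∈ G, ‖b p‖ ^ 2 ≤ t := by
      have h5 : 2 * t * (1 + t) * ((∑ p ∈ G, ‖a p‖ ^ 2) - ∑ p ∈ G, ‖b p‖ ^ 2)
          ≤ 2 * t ^ 2 * (1 + t) := by
        rw [hsumkey]
        exact sub_le_iff_le_add.mpr (husum.trans (le_add_of_nonneg_right hvsum))
      have h6 : 2 * t * (1 + t) * t = 2 * t ^ 2 * (1 + t) := by ring
      rw [← h6] at h5
      exact le_of_mul_le_mul_left h5 h2t
    exact (sub_le_iff_le_add.mp (hfinal.trans hab)).trans_eq (add_comm _ _)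

/-! ### Evolution lemmas -/

lemma matApply_norm {M : Matrix (ι × Fin N × Bool × τ) (ι × Fin N × Bool × τ) ℂ}
    (hM : M ∈ Matrix.unitaryGroup (ι × Fin N × Bool × τ) ℂ)
    (ψ : EuclideanSpace ℂ (ι × Fin N × Bool × τ)) : ‖matApply M ψ‖ = ‖ψ‖ :=
  norm_eq_of_sumsq (matApply_sumsq hM.1 ψ)

lemma oracle_norm (h : Fin N → Bool) (ψ : EuclideanSpace ℂ (ι × Fin N × Bool × τ)) :
    ‖oracleApply h ψ‖ = ‖ψ‖ :=
  norm_eq_of_sumsq (oracle_sumsq h ψ (fun z => ‖z‖ ^ 2))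

lemma matApply_sub {κ : Type} [Fintype κ] (M : Matrix κ κ ℂ) (a b : EuclideanSpace ℂ κ) :
    matApply M a - matApply M b = matApply M (a - b) := by
  ext p
  show (∑ j, M p j * a j) - (∑ j, M p j * b j) = ∑ j, M p j * (a j - b j)
  rw [← Finset.sum_sub_distrib]
  exact Finset.sum_congr rfl fun j _ => by ring

lemma oracleApply_sub (h : Fin N → Bool) (a b : EuclideanSpace ℂ (ι × Fin N × Bool × τ)) :
    oracleApply h a - oracleApply h b = oracleApply h (a - b) := rfl

lemma finalState_norm (U : ℕ → Matrix (ι × Fin N × Bool × τ) (ι × Fin N × Bool × τ) ℂ)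
    (h : Fin N → Bool) (init : EuclideanSpace ℂ (ι × Fin N × Bool × τ)) (i : ℕ)
    (hU : ∀ j, j ≤ i → U j ∈ Matrix.unitaryGroup (ι × Fin N × Bool × τ) ℂ) :
    ‖finalState U h init i‖ = ‖init‖ := by
  induction i with
  | zero => exact matApply_norm (hU 0 le_rfl) init
  | succ m ih =>
    show ‖matApply (U (m + 1)) (oracleApply h (finalState U h init m))‖ = ‖init‖
    rw [matApply_norm (hU (m + 1) le_rfl), oracle_norm,
      ih (fun j hj => hU j (hj.trans (Nat.le_succ m)))]

lemma hybrid (U : ℕ → Matrix (ι × Fin N × Bool × τ) (ι × Fin N × Bool × τ) ℂ)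
    (g h : Fin N → Bool) (init : EuclideanSpace ℂ (ι × Fin N × Bool × τ)) (q : ℕ)
    (hU : ∀ j, j ≤ q → U j ∈ Matrix.unitaryGroup (ι × Fin N × Bool × τ) ℂ) :
    ‖finalState U g init q - finalState U h init q‖
      ≤ ∑ i ∈ Finset.range q,
          ‖oracleApply g (finalState U h init i) - oracleApply h (finalState U h init i)‖ := by
  induction q with
  | zero =>
    show ‖matApply (U 0) init - matApply (U 0) init‖ ≤ _
    simp
  | succ m ih =>
    have hU' : ∀ j, j ≤ m → U j ∈ Matrix.unitaryGroup (ι × Fin N × Bool × τ) ℂ :=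
      fun j hj => hU j (hj.trans (Nat.le_succ m))
    set A := finalState U g init m with hA
    set B := finalState U h init m with hB
    have step : finalState U g init (m + 1) - finalState U h init (m + 1)
        = matApply (U (m + 1)) (oracleApply g A - oracleApply h B) := by
      show matApply (U (m + 1)) (oracleApply g A) - matApply (U (m + 1)) (oracleApply h B) = _
      rw [matApply_sub]
    rw [step, matApply_norm (hU (m + 1) le_rfl), Finset.sum_range_succ]
    have decomp : oracleApply g A - oracleApply h B
        = oracleApply g (A - B) + (oracleApply g B - oracleApply h B) := by
      rw [← oracleApply_sub]
      abel
    rw [decomp]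
    calc ‖oracleApply g (A - B) + (oracleApply g B - oracleApply h B)‖
        ≤ ‖oracleApply g (A - B)‖ + ‖oracleApply g B - oracleApply h B‖ := norm_add_le _ _
      _ ≤ (∑ i ∈ Finset.range m,
            ‖oracleApply g (finalState U h init i) - oracleApply h (finalState U h init i)‖)
          + ‖oracleApply g B - oracleApply h B‖ := by
          rw [oracle_norm]
          exact add_le_add_left (ih hU') _
      _ = _ := rfl

/-! ### Initial state -/

lemma absq_ite (P : Prop) [Decidable P] (z : ℂ) :
    ‖(if P then z else 0)‖ ^ 2 = if P then ‖z‖ ^ 2 else 0 := by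
  by_cases h : P <;> simp [h]

lemma basisVec_sumsq {κ : Type} [Fintype κ] [DecidableEq κ] (i : κ) :
    ∑ j, ‖basisVec i j‖ ^ 2 = 1 := by
  simp [basisVec, absq_ite, Finset.sum_ite_eq']

lemma init_sumsq (x0 : Fin N) (t0 : τ) (ψin : EuclideanSpace ℂ ι) :
    ∑ p, ‖initEmbed x0 t0 ψin p‖ ^ 2 = ∑ i, ‖ψin i‖ ^ 2 := by
  rw [Fintype.sum_prod_type]
  refine Finset.sum_congr rfl fun i _ => ?_
  rw [Fintype.sum_prod_type]
  simp only [initEmbed, Fintype.sum_prod_type]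
  simp [ite_and, absq_ite, Finset.sum_ite_eq']

/-! ### Counting -/

lemma count_supersets {γ : Type} [Fintype γ] [DecidableEq γ] (T : Finset γ) (m : ℕ)
    (hTm : T.card ≤ m) :
    (((Finset.univ : Finset γ).powersetCard m).filter (fun S => T ⊆ S)).card
      = (Fintype.card γ - T.card).choose (m - T.card) := by
  · have key : (((Finset.univ : Finset γ).powersetCard m).filter (fun S => T ⊆ S)).card
        = (Tᶜ.powersetCard (m - T.card)).card := by
      apply Finset.card_nbij' (fun S => S \ T) (fun R => R ∪ T)
      · intro S hS
        simp only [Finset.mem_coe, mem_filter, Finset.mem_powersetCard_univ] at hS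
        rw [Finset.mem_coe, Finset.mem_powersetCard]
        refine ⟨fun x hx => ?_, ?_⟩
        · simp only [Finset.mem_sdiff] at hx
          simpa [Finset.mem_compl] using hx.2
        · rw [Finset.card_sdiff_of_subset hS.2, hS.1]
      · intro R hR
        rw [Finset.mem_coe, Finset.mem_powersetCard] at hR
        have hdisj : Disjoint R T := by
          rw [Finset.disjoint_left]
          intro x hx
          have := hR.1 hx
          simpa [Finset.mem_compl] using this
        simp only [Finset.mem_coe, mem_filter, Finset.mem_powersetCard_univ]
        constructor
        · rw [Finset.card_union_of_disjoint hdisj, hR.2]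
          omega
        · exact Finset.subset_union_right
      · intro S hS
        simp only [Finset.mem_coe, mem_filter, Finset.mem_powersetCard_univ] at hS
        exact Finset.sdiff_union_of_subset hS.2
      · intro R hR
        rw [Finset.mem_coe, Finset.mem_powersetCard] at hR
        have hdisj : Disjoint R T := by
          rw [Finset.disjoint_left]
          intro x hx
          have := hR.1 hx
          simpa [Finset.mem_compl] using this
        exact Finset.union_sdiff_cancel_right hdisj
    rw [key, Finset.card_powersetCard, Finset.card_compl]

lemma card_inj_into {γ : Type} [Fintype γ] [DecidableEq γ] (k : ℕ) (S : Finset γ) :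
    (Finset.univ.filter (fun x : Fin k → γ => Function.Injective x ∧ ∀ i, x i ∈ S)).card
      = S.card.descFactorial k := by
  rw [← Fintype.card_subtype]
  have e : {x : Fin k → γ // Function.Injective x ∧ ∀ i, x i ∈ S} ≃ (Fin k ↪ {y : γ // y ∈ S}) :=
    { toFun := fun x => ⟨fun i => ⟨x.1 i, x.2.2 i⟩, fun i j h => x.2.1 (congrArg Subtype.val h)⟩
      invFun := fun e => ⟨fun i => (e i).1, fun i j h => e.injective (Subtype.ext h),
        fun i => (e i).2⟩
      left_inv := fun x => by ext i; rfl
      right_inv := fun e => by ext i; rfl }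
  rw [Fintype.card_congr e, Fintype.card_embedding_eq, Fintype.card_coe, Fintype.card_fin]

lemma card_inj {γ : Type} [Fintype γ] [DecidableEq γ] (k : ℕ) :
    (Finset.univ.filter (fun x : Fin k → γ => Function.Injective x)).card
      = (Fintype.card γ).descFactorial k := by
  rw [← Fintype.card_subtype, Fintype.card_congr (Equiv.subtypeInjectiveEquivEmbedding (Fin k) γ),
    Fintype.card_embedding_eq, Fintype.card_fin]

lemma expectation {γ idx : Type} [Fintype γ] [DecidableEq γ] [Fintype idx]
    (T : Finset γ) (m : ℕ) (hTm : T.card + 1 ≤ m) (L : idx → γ) (w : idx → ℝ)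
    (hw : ∀ p, 0 ≤ w p) :
    ∑ S ∈ (Finset.univ.powersetCard m).filter (fun S => T ⊆ S),
        ∑ p ∈ Finset.univ.filter (fun p => L p ∈ S ∧ L p ∉ T), w p
      ≤ ((Fintype.card γ - (T.card + 1)).choose (m - (T.card + 1)) : ℝ) * ∑ p, w p := by
  classical
  have hstep : ∀ S ∈ (Finset.univ.powersetCard m).filter (fun S => T ⊆ S),
      ∑ p ∈ Finset.univ.filter (fun p => L p ∈ S ∧ L p ∉ T), w p
        = ∑ p, (if L p ∈ S ∧ L p ∉ T then w p else 0) := fun S _ => Finset.sum_filter _ _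
  rw [Finset.sum_congr rfl hstep, Finset.sum_comm, Finset.mul_sum]
  refine Finset.sum_le_sum fun p _ => ?_
  by_cases hT : L p ∈ T
  · have hz : ∀ S : Finset γ, (if L p ∈ S ∧ L p ∉ T then w p else 0) = 0 := fun S => by
      simp [hT]
    simp only [hz, Finset.sum_const_zero]
    exact mul_nonneg (Nat.cast_nonneg _) (hw p)
  · have heq : ∀ S ∈ (Finset.univ.powersetCard m).filter (fun S => T ⊆ S),
        (if L p ∈ S ∧ L p ∉ T then w p else 0) = (if L p ∈ S then w p else 0) := by
      intro S _; by_cases h : L p ∈ S <;> simp [h, hT]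
    rw [Finset.sum_congr rfl heq, ← Finset.sum_filter, Finset.sum_const, Finset.filter_filter]
    have hpred : ∀ S ∈ (Finset.univ : Finset γ).powersetCard m,
        (T ⊆ S ∧ L p ∈ S) ↔ (insert (L p) T) ⊆ S := by
      intro S _; rw [Finset.insert_subset_iff]; tauto
    rw [Finset.filter_congr hpred,
      count_supersets _ _ (by rw [Finset.card_insert_of_notMem hT]; exact hTm),
      Finset.card_insert_of_notMem hT, nsmul_eq_mul]

/-! ### Projection sums -/

lemma proj_sum {ι β : Type} [Fintype ι] [Fintype β] {N : ℕ}
    (A : Finset (Fin N)) (ψ : EuclideanSpace ℂ (ι × Fin N × Bool × (Fin N × β))) :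
    ∑ y ∈ A, ‖projOutput y ψ‖ ^ 2
      = ∑ p ∈ Finset.univ.filter (fun p : ι × Fin N × Bool × (Fin N × β) => p.2.2.2.1 ∈ A),
          ‖ψ p‖ ^ 2 := by
  classical
  calc ∑ y ∈ A, ‖projOutput y ψ‖ ^ 2
      = ∑ y ∈ A, ∑ p, (if p.2.2.2.1 = y then ‖ψ p‖ ^ 2 else 0) := by
        refine Finset.sum_congr rfl fun y _ => ?_
        rw [norm_sq_eq']
        refine Finset.sum_congr rfl fun p _ => ?_
        show ‖(if p.2.2.2.1 = y then ψ p else 0)‖ ^ 2 = _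
        by_cases h : p.2.2.2.1 = y <;> simp [h]
    _ = ∑ p, ∑ y ∈ A, (if p.2.2.2.1 = y then ‖ψ p‖ ^ 2 else 0) := Finset.sum_comm
    _ = ∑ p, (if p.2.2.2.1 ∈ A then ‖ψ p‖ ^ 2 else 0) :=
        Finset.sum_congr rfl fun p _ => Finset.sum_ite_eq A p.2.2.2.1 _
    _ = _ := (Finset.sum_filter _ _).symm

lemma le_two_sqrt {x M : ℝ} (hx : 0 ≤ x) (hM : 0 ≤ M) (h : x ^ 2 ≤ 4 * M) :
    x ≤ 2 * Real.sqrt M := by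
  nlinarith [Real.sq_sqrt hM, Real.sqrt_nonneg M, sq_nonneg (x - 2 * Real.sqrt M),
    sq_nonneg (x + 2 * Real.sqrt M)]

/-! ### The per-tuple estimate -/

lemma per_x {ι β : Type} [Fintype ι] [DecidableEq ι] [Fintype β] [DecidableEq β] {N : ℕ}
    (U : ℕ → Matrix (ι × Fin N × Bool × (Fin N × β)) (ι × Fin N × Bool × (Fin N × β)) ℂ)
    (q : ℕ)
    (hU : ∀ j, j ≤ q → U j ∈ Matrix.unitaryGroup (ι × Fin N × Bool × (Fin N × β)) ℂ)
    (init : EuclideanSpace ℂ (ι × Fin N × Bool × (Fin N × β))) (hinit : ‖init‖ = 1)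
    (T : Finset (Fin N)) (s : ℕ) (hks : T.card < s) (hsN : s ≤ N) :
    ∑ S ∈ ((Finset.univ : Finset (Fin N)).powersetCard s).filter (fun S => T ⊆ S),
        ∑ y ∈ S.filter (fun y => y ∉ T),
          ‖projOutput y (finalState U (fun z => decide (z ∈ S)) init q)‖ ^ 2
      ≤ (((N - T.card).choose (s - T.card) : ℝ)) *
          (2 * q * Real.sqrt (((s : ℝ) - T.card) / ((N : ℝ) - T.card))
            + ((s : ℝ) - T.card) / ((N : ℝ) - T.card)) := by
  classical
  obtain ⟨k, hk⟩ : ∃ m, m = T.card := ⟨_, rfl⟩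
  rw [← hk]
  have hkN : k < N := lt_of_lt_of_le (hk ▸ hks) hsN
  have hks' : k < s := hk ▸ hks
  obtain ⟨r, hrdef⟩ : ∃ r : ℝ, r = ((s : ℝ) - k) / ((N : ℝ) - k) := ⟨_, rfl⟩
  rw [← hrdef]
  have hNk : (0 : ℝ) < (N : ℝ) - k := by
    have : (k : ℝ) < N := by exact_mod_cast hkN
    linarith
  have hsk : (0 : ℝ) < (s : ℝ) - k := by
    have : (k : ℝ) < s := by exact_mod_cast hks'
    linarith
  have hr0 : 0 ≤ r := by rw [hrdef]; positivity
  obtain ⟨SS, hSS⟩ : ∃ X : Finset (Finset (Fin N)),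
      X = ((Finset.univ : Finset (Fin N)).powersetCard s).filter (fun S => T ⊆ S) := ⟨_, rfl⟩
  rw [← hSS]
  obtain ⟨hT, hhT⟩ : ∃ f : Fin N → Bool, f = fun z => decide (z ∈ T) := ⟨_, rfl⟩
  obtain ⟨b, hbdef⟩ : ∃ f : ℕ → EuclideanSpace ℂ (ι × Fin N × Bool × (Fin N × β)),
      f = fun i => finalState U hT init i := ⟨_, rfl⟩
  have hbnorm : ∀ i, i ≤ q → ‖b i‖ = 1 := fun i hi => by
    rw [hbdef]
    show ‖finalState U hT init i‖ = 1
    rw [finalState_norm U hT init i (fun j hj => hU j (hj.trans hi)), hinit]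
  have hbsumsq : ∀ i, i ≤ q → ∑ p, ‖b i p‖ ^ 2 = 1 := fun i hi => by
    rw [← norm_sq_eq', hbnorm i hi]; norm_num
  obtain ⟨C1, hC1⟩ : ∃ m, m = (N - k).choose (s - k) := ⟨_, rfl⟩
  obtain ⟨C2, hC2⟩ : ∃ m, m = (N - (k + 1)).choose (s - (k + 1)) := ⟨_, rfl⟩
  rw [← hC1]
  have hcard : SS.card = C1 := by
    rw [hSS, count_supersets T s (hk ▸ hks'.le), Fintype.card_fin, ← hk, hC1]
  have hratioN : (N - k) * C2 = (s - k) * C1 := by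
    have h1 : N - k = (N - (k + 1)) + 1 := by omega
    have h2 : s - k = (s - (k + 1)) + 1 := by omega
    rw [hC1, hC2, h1, h2]
    simpa [Nat.succ_eq_add_one, mul_comm] using
      Nat.add_one_mul_choose_eq (N - (k + 1)) (s - (k + 1))
  have hratio : (C2 : ℝ) ≤ r * C1 := by
    have hcast : ((N : ℝ) - k) * (C2 : ℝ) = ((s : ℝ) - k) * (C1 : ℝ) := by
      have hc := congrArg (Nat.cast (R := ℝ)) hratioN
      push_cast [Nat.cast_sub hkN.le, Nat.cast_sub hks'.le] at hc
      linarith [hc]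
    have heq : (C2 : ℝ) = r * C1 := by
      rw [hrdef]
      field_simp
      linarith [hcast]
    linarith [heq]
  -- per-S estimate
  have perS : ∀ S ∈ SS,
      (∑ y ∈ S.filter (fun y => y ∉ T),
          ‖projOutput y (finalState U (fun z => decide (z ∈ S)) init q)‖ ^ 2)
        ≤ (∑ p ∈ Finset.univ.filter
              (fun p : ι × Fin N × Bool × (Fin N × β) => p.2.2.2.1 ∈ S ∧ p.2.2.2.1 ∉ T),
            ‖b q p‖ ^ 2)
          + ∑ i ∈ Finset.range q, 2 * Real.sqrt (∑ p ∈ Finset.univ.filter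
              (fun p : ι × Fin N × Bool × (Fin N × β) => p.2.1 ∈ S ∧ p.2.1 ∉ T),
            ‖b i p‖ ^ 2) := by
    intro S hS
    rw [hSS, Finset.mem_filter, Finset.mem_powersetCard_univ] at hS
    obtain ⟨hScard, hTS⟩ := hS
    obtain ⟨g, hg⟩ : ∃ f : Fin N → Bool, f = fun z => decide (z ∈ S) := ⟨_, rfl⟩
    rw [← hg]
    obtain ⟨a, hadef⟩ : ∃ w, w = finalState U g init q := ⟨_, rfl⟩
    rw [← hadef]
    have hanorm : ‖a‖ = 1 := by
      rw [hadef, finalState_norm U g init q hU, hinit]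
    have ha1 : ∑ y ∈ S.filter (fun y => y ∉ T), ‖projOutput y a‖ ^ 2
        = ∑ p ∈ Finset.univ.filter
            (fun p : ι × Fin N × Bool × (Fin N × β) => p.2.2.2.1 ∈ S ∧ p.2.2.2.1 ∉ T),
          ‖a p‖ ^ 2 := by
      rw [proj_sum]
      refine Finset.sum_congr (Finset.filter_congr fun p _ => ?_) fun _ _ => rfl
      simp [Finset.mem_filter]
    rw [ha1]
    have hhel := helstrom a (b q) hanorm (hbnorm q le_rfl)
      (Finset.univ.filter
        (fun p : ι × Fin N × Bool × (Fin N × β) => p.2.2.2.1 ∈ S ∧ p.2.2.2.1 ∉ T))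
    have hhyb : ‖a - b q‖ ≤ ∑ i ∈ Finset.range q,
        ‖oracleApply g (b i) - oracleApply hT (b i)‖ := by
      rw [hadef, hbdef]
      exact hybrid U g hT init q hU
    have hdiff : ∀ i ∈ Finset.range q,
        ‖oracleApply g (b i) - oracleApply hT (b i)‖
          ≤ 2 * Real.sqrt (∑ p ∈ Finset.univ.filter
              (fun p : ι × Fin N × Bool × (Fin N × β) => p.2.1 ∈ S ∧ p.2.1 ∉ T),
            ‖b i p‖ ^ 2) := by
      intro i _
      have h4 := oracle_diff_sq g hT (b i)
      have hfc : Finset.univ.filter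
            (fun p : ι × Fin N × Bool × (Fin N × β) => g p.2.1 ≠ hT p.2.1)
          = Finset.univ.filter
            (fun p : ι × Fin N × Bool × (Fin N × β) => p.2.1 ∈ S ∧ p.2.1 ∉ T) := by
        refine Finset.filter_congr fun p _ => ?_
        rw [hg, hhT]
        constructor
        · intro hne
          by_cases hzT : p.2.1 ∈ T
          · exact absurd (by simp [hzT, hTS hzT]) hne
          · refine ⟨?_, hzT⟩
            by_contra hzS
            exact hne (by simp [hzS, hzT])
        · rintro ⟨h1, h2⟩
          simp [h1, h2]
      rw [hfc] at h4
      exact le_two_sqrt (norm_nonneg _) (Finset.sum_nonneg fun p _ => sq_nonneg _) h4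
    exact hhel.trans (add_le_add_right (hhyb.trans (Finset.sum_le_sum hdiff)) _)
  -- summation over S
  have hsumQ : ∑ S ∈ SS, ∑ p ∈ Finset.univ.filter
      (fun p : ι × Fin N × Bool × (Fin N × β) => p.2.2.2.1 ∈ S ∧ p.2.2.2.1 ∉ T),
        ‖b q p‖ ^ 2 ≤ r * C1 := by
    have hexp := expectation T s (by omega) (fun p : ι × Fin N × Bool × (Fin N × β) => p.2.2.2.1)
      (fun p => ‖b q p‖ ^ 2) (fun p => sq_nonneg _)
    rw [Fintype.card_fin, ← hk, ← hC2, hbsumsq q le_rfl, mul_one, ← hSS] at hexp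
    exact hexp.trans hratio
  have hsumP : ∀ i ∈ Finset.range q,
      ∑ S ∈ SS, Real.sqrt (∑ p ∈ Finset.univ.filter
        (fun p : ι × Fin N × Bool × (Fin N × β) => p.2.1 ∈ S ∧ p.2.1 ∉ T),
          ‖b i p‖ ^ 2) ≤ C1 * Real.sqrt r := by
    intro i hi
    rw [Finset.mem_range] at hi
    have hexp := expectation T s (by omega) (fun p : ι × Fin N × Bool × (Fin N × β) => p.2.1)
      (fun p => ‖b i p‖ ^ 2) (fun p => sq_nonneg _)
    rw [Fintype.card_fin, ← hk, ← hC2, hbsumsq i hi.le, mul_one, ← hSS] at hexp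
    have hCS := Real.sum_sqrt_mul_sqrt_le SS
      (f := fun S => ∑ p ∈ Finset.univ.filter
        (fun p : ι × Fin N × Bool × (Fin N × β) => p.2.1 ∈ S ∧ p.2.1 ∉ T),
          ‖b i p‖ ^ 2)
      (g := fun _ => 1)
      (fun S => Finset.sum_nonneg fun p _ => sq_nonneg _) (fun _ => zero_le_one)
    simp only [Real.sqrt_one, mul_one, Finset.sum_const, nsmul_eq_mul, hcard] at hCS
    have h5 : Real.sqrt (∑ S ∈ SS, ∑ p ∈ Finset.univ.filter
        (fun p : ι × Fin N × Bool × (Fin N × β) => p.2.1 ∈ S ∧ p.2.1 ∉ T),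
          ‖b i p‖ ^ 2) ≤ Real.sqrt (r * C1) :=
      Real.sqrt_le_sqrt (hexp.trans hratio)
    have h6 : Real.sqrt (r * C1) * Real.sqrt (C1 : ℝ) = C1 * Real.sqrt r := by
      rw [Real.sqrt_mul hr0, mul_assoc, Real.mul_self_sqrt (Nat.cast_nonneg _)]
      ring
    calc ∑ S ∈ SS, Real.sqrt (∑ p ∈ Finset.univ.filter
          (fun p : ι × Fin N × Bool × (Fin N × β) => p.2.1 ∈ S ∧ p.2.1 ∉ T),
            ‖b i p‖ ^ 2)
        ≤ Real.sqrt (∑ S ∈ SS, ∑ p ∈ Finset.univ.filter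
            (fun p : ι × Fin N × Bool × (Fin N × β) => p.2.1 ∈ S ∧ p.2.1 ∉ T),
              ‖b i p‖ ^ 2) * Real.sqrt (C1 : ℝ) := hCS
      _ ≤ Real.sqrt (r * C1) * Real.sqrt (C1 : ℝ) :=
          mul_le_mul_of_nonneg_right h5 (Real.sqrt_nonneg _)
      _ = C1 * Real.sqrt r := h6
  calc ∑ S ∈ SS, ∑ y ∈ S.filter (fun y => y ∉ T),
        ‖projOutput y (finalState U (fun z => decide (z ∈ S)) init q)‖ ^ 2
      ≤ ∑ S ∈ SS, ((∑ p ∈ Finset.univ.filter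
            (fun p : ι × Fin N × Bool × (Fin N × β) => p.2.2.2.1 ∈ S ∧ p.2.2.2.1 ∉ T),
          ‖b q p‖ ^ 2)
        + ∑ i ∈ Finset.range q, 2 * Real.sqrt (∑ p ∈ Finset.univ.filter
            (fun p : ι × Fin N × Bool × (Fin N × β) => p.2.1 ∈ S ∧ p.2.1 ∉ T),
          ‖b i p‖ ^ 2)) := Finset.sum_le_sum perS
    _ = (∑ S ∈ SS, ∑ p ∈ Finset.univ.filter
            (fun p : ι × Fin N × Bool × (Fin N × β) => p.2.2.2.1 ∈ S ∧ p.2.2.2.1 ∉ T),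
          ‖b q p‖ ^ 2)
        + ∑ i ∈ Finset.range q, ∑ S ∈ SS,
            2 * Real.sqrt (∑ p ∈ Finset.univ.filter
              (fun p : ι × Fin N × Bool × (Fin N × β) => p.2.1 ∈ S ∧ p.2.1 ∉ T),
            ‖b i p‖ ^ 2) := by
        rw [Finset.sum_add_distrib, Finset.sum_comm]
    _ ≤ r * C1 + ∑ i ∈ Finset.range q, 2 * (C1 * Real.sqrt r) := by
        refine add_le_add hsumQ (Finset.sum_le_sum fun i hi => ?_)
        rw [← Finset.mul_sum]
        have := hsumP i hi
        linarith [this]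
    _ = (C1 : ℝ) * (2 * q * Real.sqrt r + r) := by
        rw [Finset.sum_const, Finset.card_range, nsmul_eq_mul]
        ring

end QAux

open Finset in
theorem stmt_9 (n k s q W : ℕ) (hk : 1 ≤ k) (hks : k < s) (hs : s ≤ 2 ^ n)
    (hkN : k < 2 ^ n) (hq : 1 ≤ q) (hW : 1 ≤ W)
    (U : ℕ → Matrix
      ((Fin k → Fin (2 ^ n)) × Fin (2 ^ n) × Bool × (Fin (2 ^ n) × Fin W))
      ((Fin k → Fin (2 ^ n)) × Fin (2 ^ n) × Bool × (Fin (2 ^ n) × Fin W)) ℂ)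
    (hU : ∀ i ≤ q, U i ∈ Matrix.unitaryGroup
      ((Fin k → Fin (2 ^ n)) × Fin (2 ^ n) × Bool × (Fin (2 ^ n) × Fin W)) ℂ) :
    ((Nat.choose (2 ^ n) s : ℝ))⁻¹ *
        ∑ S ∈ Finset.univ.powersetCard s,
          (((Finset.univ.filter (fun x : Fin k → Fin (2 ^ n) =>
              Function.Injective x ∧ ∀ i, x i ∈ S)).card : ℝ))⁻¹ *
            ∑ x ∈ Finset.univ.filter (fun x : Fin k → Fin (2 ^ n) =>
                Function.Injective x ∧ ∀ i, x i ∈ S),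
              ∑ y ∈ S.filter (fun y => ∀ i, x i ≠ y),
                ‖projOutput y (finalState U (fun z => decide (z ∈ S))
                    (initEmbed (⟨0, pow_pos (by norm_num) n⟩ : Fin (2 ^ n))
                      ((⟨0, pow_pos (by norm_num) n⟩ : Fin (2 ^ n)), (⟨0, hW⟩ : Fin W))
                      (basisVec x)) q)‖ ^ 2
      ≤ 2 * q * Real.sqrt (((s : ℝ) - k) / ((2 ^ n : ℕ) - k))
        + ((s : ℝ) - k) / ((2 ^ n : ℕ) - k) := by
  classical
  obtain ⟨F, hF⟩ : ∃ f : Finset (Fin (2 ^ n)) → (Fin k → Fin (2 ^ n)) → ℝ,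
      f = fun S x => ∑ y ∈ S.filter (fun y => ∀ i, x i ≠ y),
        ‖projOutput y (finalState U (fun z => decide (z ∈ S))
            (initEmbed (⟨0, pow_pos (by norm_num) n⟩ : Fin (2 ^ n))
              ((⟨0, pow_pos (by norm_num) n⟩ : Fin (2 ^ n)), (⟨0, hW⟩ : Fin W))
              (basisVec x)) q)‖ ^ 2 := ⟨_, rfl⟩
  obtain ⟨XJ, hXJ⟩ : ∃ X : Finset (Fin k → Fin (2 ^ n)),
      X = Finset.univ.filter (fun x : Fin k → Fin (2 ^ n) => Function.Injective x) := ⟨_, rfl⟩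
  rw [show (∑ S ∈ Finset.univ.powersetCard s,
      (((Finset.univ.filter (fun x : Fin k → Fin (2 ^ n) =>
          Function.Injective x ∧ ∀ i, x i ∈ S)).card : ℝ))⁻¹ *
        ∑ x ∈ Finset.univ.filter (fun x : Fin k → Fin (2 ^ n) =>
            Function.Injective x ∧ ∀ i, x i ∈ S),
          ∑ y ∈ S.filter (fun y => ∀ i, x i ≠ y),
            ‖projOutput y (finalState U (fun z => decide (z ∈ S))
                (initEmbed (⟨0, pow_pos (by norm_num) n⟩ : Fin (2 ^ n))
                  ((⟨0, pow_pos (by norm_num) n⟩ : Fin (2 ^ n)), (⟨0, hW⟩ : Fin W))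
                  (basisVec x)) q)‖ ^ 2)
    = ∑ S ∈ Finset.univ.powersetCard s,
      (((Finset.univ.filter (fun x : Fin k → Fin (2 ^ n) =>
          Function.Injective x ∧ ∀ i, x i ∈ S)).card : ℝ))⁻¹ *
        ∑ x ∈ Finset.univ.filter (fun x : Fin k → Fin (2 ^ n) =>
            Function.Injective x ∧ ∀ i, x i ∈ S), F S x from by simp only [hF]]
  obtain ⟨r, hrdef⟩ : ∃ t : ℝ, t = ((s : ℝ) - k) / ((2 ^ n : ℕ) - k) := ⟨_, rfl⟩
  rw [← hrdef]
  obtain ⟨B, hBdef⟩ : ∃ t : ℝ, t = 2 * q * Real.sqrt r + r := ⟨_, rfl⟩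
  rw [← hBdef]
  have hNk : (0 : ℝ) < ((2 ^ n : ℕ) : ℝ) - k := by
    have : (k : ℝ) < ((2 ^ n : ℕ) : ℝ) := by exact_mod_cast hkN
    linarith
  have hr0 : 0 ≤ r := by
    rw [hrdef]
    apply div_nonneg _ hNk.le
    have : (k : ℝ) < s := by exact_mod_cast hks
    linarith
  have hB0 : 0 ≤ B := by
    rw [hBdef]
    positivity
  obtain ⟨C, hC⟩ : ∃ m, m = Nat.choose (2 ^ n) s := ⟨_, rfl⟩
  obtain ⟨D, hD⟩ : ∃ m, m = s.descFactorial k := ⟨_, rfl⟩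
  obtain ⟨I, hI⟩ : ∃ m, m = (2 ^ n).descFactorial k := ⟨_, rfl⟩
  obtain ⟨C1, hC1⟩ : ∃ m, m = (2 ^ n - k).choose (s - k) := ⟨_, rfl⟩
  rw [← hC]
  have hCpos : 0 < C := hC ▸ Nat.choose_pos hs
  have hDpos : 0 < D := by
    rw [hD, Nat.descFactorial_eq_factorial_mul_choose]
    exact Nat.mul_pos (Nat.factorial_pos k) (Nat.choose_pos hks.le)
  have hid : C * D = I * C1 := by
    rw [hC, hD, hI, hC1, Nat.descFactorial_eq_factorial_mul_choose,
      Nat.descFactorial_eq_factorial_mul_choose]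
    calc (2 ^ n).choose s * (k.factorial * s.choose k)
        = k.factorial * ((2 ^ n).choose s * s.choose k) := by ring
      _ = k.factorial * ((2 ^ n).choose k * (2 ^ n - k).choose (s - k)) := by
          rw [Nat.choose_mul hks.le]
      _ = k.factorial * (2 ^ n).choose k * (2 ^ n - k).choose (s - k) := by ring
  have hstep1 : ∀ S ∈ (Finset.univ : Finset (Fin (2 ^ n))).powersetCard s,
      (((Finset.univ.filter (fun x : Fin k → Fin (2 ^ n) =>
          Function.Injective x ∧ ∀ i, x i ∈ S)).card : ℝ))⁻¹ *
        ∑ x ∈ Finset.univ.filter (fun x : Fin k → Fin (2 ^ n) =>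
            Function.Injective x ∧ ∀ i, x i ∈ S), F S x
      = ((D : ℝ))⁻¹ * ∑ x ∈ XJ, (if (∀ i, x i ∈ S) then F S x else 0) := by
    intro S hS
    rw [Finset.mem_powersetCard_univ] at hS
    have hcard : (Finset.univ.filter (fun x : Fin k → Fin (2 ^ n) =>
        Function.Injective x ∧ ∀ i, x i ∈ S)).card = D := by
      rw [QAux.card_inj_into, hS, hD]
    rw [hcard]
    congr 1
    rw [hXJ, ← Finset.sum_filter, Finset.filter_filter]
  rw [Finset.sum_congr rfl hstep1, ← Finset.mul_sum, Finset.sum_comm]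
  have hxbound : ∀ x ∈ XJ,
      ∑ S ∈ (Finset.univ : Finset (Fin (2 ^ n))).powersetCard s,
        (if (∀ i, x i ∈ S) then F S x else 0) ≤ (C1 : ℝ) * B := by
    intro x hx
    rw [hXJ, Finset.mem_filter] at hx
    have hxinj : Function.Injective x := hx.2
    obtain ⟨T, hT⟩ : ∃ T : Finset (Fin (2 ^ n)), T = Finset.image x Finset.univ := ⟨_, rfl⟩
    have hTcard : T.card = k := by
      rw [hT, Finset.card_image_of_injective _ hxinj, Finset.card_univ, Fintype.card_fin]
    have hinit : ‖initEmbed (⟨0, pow_pos (by norm_num) n⟩ : Fin (2 ^ n))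
        ((⟨0, pow_pos (by norm_num) n⟩ : Fin (2 ^ n)), (⟨0, hW⟩ : Fin W))
        (basisVec x)‖ = 1 := by
      have hsq : ‖initEmbed (⟨0, pow_pos (by norm_num) n⟩ : Fin (2 ^ n))
          ((⟨0, pow_pos (by norm_num) n⟩ : Fin (2 ^ n)), (⟨0, hW⟩ : Fin W))
          (basisVec x)‖ ^ 2 = 1 := by
        rw [QAux.norm_sq_eq', QAux.init_sumsq, QAux.basisVec_sumsq]
      rw [← Real.sqrt_sq (norm_nonneg _), hsq, Real.sqrt_one]
    have hperx := QAux.per_x U q hU _ hinit T s (hTcard ▸ hks) hs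
    rw [hTcard] at hperx
    have hsum_eq : ∑ S ∈ (Finset.univ : Finset (Fin (2 ^ n))).powersetCard s,
        (if (∀ i, x i ∈ S) then F S x else 0)
        = ∑ S ∈ ((Finset.univ : Finset (Fin (2 ^ n))).powersetCard s).filter
            (fun S => T ⊆ S),
          ∑ y ∈ S.filter (fun y => y ∉ T),
            ‖projOutput y (finalState U (fun z => decide (z ∈ S))
                (initEmbed (⟨0, pow_pos (by norm_num) n⟩ : Fin (2 ^ n))
                  ((⟨0, pow_pos (by norm_num) n⟩ : Fin (2 ^ n)), (⟨0, hW⟩ : Fin W))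
                  (basisVec x)) q)‖ ^ 2 := by
      rw [← Finset.sum_filter]
      have hpred : ∀ S ∈ (Finset.univ : Finset (Fin (2 ^ n))).powersetCard s,
          (∀ i, x i ∈ S) ↔ T ⊆ S := by
        intro S _
        rw [hT, Finset.image_subset_iff]
        constructor
        · intro h i _; exact h i
        · intro h i; exact h i (Finset.mem_univ i)
      rw [Finset.filter_congr hpred]
      refine Finset.sum_congr rfl fun S _ => ?_
      rw [hF]
      refine Finset.sum_congr (Finset.filter_congr fun y _ => ?_) fun _ _ => rfl
      rw [hT]
      simp [Finset.mem_image]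
    rw [hsum_eq, hC1, hBdef, hrdef]
    exact hperx
  have hmain : ∑ x ∈ XJ,
      ∑ S ∈ (Finset.univ : Finset (Fin (2 ^ n))).powersetCard s,
        (if (∀ i, x i ∈ S) then F S x else 0)
      ≤ (I : ℝ) * ((C1 : ℝ) * B) := by
    have h1 := Finset.sum_le_sum hxbound
    rw [Finset.sum_const, nsmul_eq_mul] at h1
    have hXJcard : ((XJ.card : ℕ) : ℝ) = (I : ℝ) := by
      rw [hXJ, QAux.card_inj, Fintype.card_fin, hI]
    rw [hXJcard] at h1
    exact h1
  have hfinal : ((C : ℝ))⁻¹ * (((D : ℝ))⁻¹ * ((I : ℝ) * ((C1 : ℝ) * B))) = B := by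
    have hIC1 : (I : ℝ) * (C1 : ℝ) = (C : ℝ) * (D : ℝ) := by
      exact_mod_cast congrArg (Nat.cast (R := ℝ)) hid.symm
    have hCne : (C : ℝ) ≠ 0 := Nat.cast_ne_zero.mpr hCpos.ne'
    have hDne : (D : ℝ) ≠ 0 := Nat.cast_ne_zero.mpr hDpos.ne'
    field_simp
    calc (I : ℝ) * (C1 : ℝ) * B = ((I : ℝ) * (C1 : ℝ)) * B := by ring
      _ = ((C : ℝ) * (D : ℝ)) * B := by rw [hIC1]
      _ = ((C : ℝ) * (D : ℝ)) * B := by ring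
  refine le_trans ?_ (le_of_eq hfinal)
  apply mul_le_mul_of_nonneg_left _ (by positivity)
  apply mul_le_mul_of_nonneg_left hmain (by positivity)
end
end
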